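/- Let b = λ + iη with λ, η ∈ ℝ and λ > 0. Define ℛₙ(b;z) = ((2λ)ₙ/(λ)ₙ) · Σ_{k=0}^{n} [(−n)ₖ(b)ₖ/((2λ)ₖ k!)] (1−z)ᵏ and Φₙ(b;z) = ((2λ+1)ₙ/((b+1)ₙ)) · Σ_{k=0}^{n} [(−n)ₖ(b+1)ₖ/((2λ+1)ₖ k!)] (1−z)ᵏ. Then for every n ≥ 1, ℛₙ(b;z) = ((b)ₙ/(λ)ₙ) · [ z·Φₙ₋₁(b;z) + ((conj(b))ₙ/(b)ₙ) · Φ*ₙ₋₁(b;z) ], where Φ*ₙ₋₁(b;z) = z^{n−1} · conj(Φₙ₋₁(b; 1/conj(z))) is the reversed polynomial of Φₙ₋₁(b;·); i.e., ℛₙ(b;·) is a para-orthogonal polynomial associated with Φₙ₋₁(b;·). -/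

import Mathlib

/-!
Write `b = λ + iη`, so that `b + b̄ = 2λ`, and let `F(-m, a; c; w)` be the terminating Gauss
series, taken at `w = 1 - z`. Then `ℛₙ` is a multiple of `F(-n, b; 2λ; w)` and `Φₙ₋₁` one of
`F(-(n-1), b + 1; 2λ + 1; w)`. Pfaff's transformation
`zᵐ F(-m, a; c; 1 - 1/z) = F(-m, c - a; c; 1 - z)`, which follows from the binomial theorem and
Chu–Vandermonde, turns `Φ*ₙ₋₁` into a multiple of `F(-(n-1), b; 2λ + 1; w)`. The identity is then
the contiguous relation
`c F(-(m+1), a; c; w) = a (1 - w) F(-m, a + 1; c + 1; w) + (c - a) F(-m, a; c + 1; w)`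
at `a = b`, `c = 2λ`, which is checked coefficientwise.
-/

open Complex Finset

/-- Pochhammer symbol `(a)ₖ` over ℂ. -/
noncomputable def poch (a : ℂ) (k : ℕ) : ℂ := Polynomial.eval a (ascPochhammer ℂ k)

/-- The polynomials `ℛₙ(b;z)` (hypergeometric form), with `b = λ + iη`. -/
noncomputable def RR (lam eta : ℝ) (n : ℕ) (z : ℂ) : ℂ :=
  (poch (2 * lam) n / poch (lam : ℂ) n) *
    ∑ k ∈ Finset.range (n + 1),
      poch (-(n : ℂ)) k * poch ((lam : ℂ) + (eta : ℂ) * I) k /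
          (poch (2 * lam) k * (Nat.factorial k : ℂ)) * (1 - z) ^ k

/-- The monic orthogonal polynomials `Φₙ(b;z)` on the unit circle, `b = λ + iη`. -/
noncomputable def Phi (lam eta : ℝ) (n : ℕ) (z : ℂ) : ℂ :=
  (poch (2 * lam + 1) n / poch ((lam : ℂ) + (eta : ℂ) * I + 1) n) *
    ∑ k ∈ Finset.range (n + 1),
      poch (-(n : ℂ)) k * poch ((lam : ℂ) + (eta : ℂ) * I + 1) k /
          (poch (2 * lam + 1) k * (Nat.factorial k : ℂ)) * (1 - z) ^ k

/-- The reversed polynomial `Φ*ₙ(b;z) = zⁿ · conj(Φₙ(b; 1/conj z))`. -/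
noncomputable def PhiStar (lam eta : ℝ) (n : ℕ) (z : ℂ) : ℂ :=
  z ^ n * (starRingEnd ℂ) (Phi lam eta n (((starRingEnd ℂ) z)⁻¹))

open ComplexConjugate

lemma poch_zero (a : ℂ) : poch a 0 = 1 := by simp [poch]

lemma poch_succ_left (a : ℂ) (k : ℕ) : poch a (k + 1) = a * poch (a + 1) k := by
  simp [poch, ascPochhammer_succ_left, Polynomial.eval_comp]

lemma poch_succ_right (a : ℂ) (k : ℕ) : poch a (k + 1) = poch a k * (a + k) :=
  ascPochhammer_succ_eval k a

lemma poch_add (a : ℂ) (k l : ℕ) : poch a (k + l) = poch a k * poch (a + k) l := by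
  simpa [poch, Polynomial.eval_comp] using
    (congrArg (Polynomial.eval a) (ascPochhammer_mul ℂ k l)).symm

lemma conj_poch (a : ℂ) (k : ℕ) : conj (poch a k) = poch (conj a) k := by
  induction k with
  | zero => simp [poch_zero]
  | succ k ih => simp [poch_succ_right, ih]

lemma poch_ne_zero {a : ℂ} (ha : ∀ k : ℕ, a + k ≠ 0) (n : ℕ) : poch a n ≠ 0 := by
  induction n with
  | zero => simp [poch_zero]
  | succ n ih => rw [poch_succ_right]; exact mul_ne_zero ih (ha n)

lemma add_natCast_ne_zero_of_re_pos {a : ℂ} (ha : 0 < a.re) (k : ℕ) : a + k ≠ 0 := by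
  intro h
  have := congrArg re h
  simp only [add_re, natCast_re, zero_re] at this
  linarith [k.cast_nonneg (α := ℝ)]

lemma poch_neg_natCast (m k : ℕ) : poch (-m) k = (-1) ^ k * m.descFactorial k := by
  rw [poch, ascPochhammer_eval_neg_eq_descPochhammer, descPochhammer_eval_eq_descFactorial ℂ]

lemma poch_neg_natCast_of_lt {m k : ℕ} (h : m < k) : poch (-m) k = 0 := by
  rw [poch_neg_natCast, Nat.descFactorial_of_lt h, Nat.cast_zero, mul_zero]

lemma poch_neg_sub_add_one (a : ℂ) (k : ℕ) : poch (-a - k + 1) k = (-1) ^ k * poch a k := by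
  have h := ascPochhammer_eval_neg_eq_descPochhammer ℂ (-a) k
  rw [neg_neg, descPochhammer_eval_eq_ascPochhammer] at h
  rw [poch, poch, h, ← mul_assoc, ← mul_pow, neg_one_mul, neg_neg, one_pow, one_mul]

/-- Chu–Vandermonde, in the form of the falling-factorial binomial theorem. -/
lemma poch_sub_eq_sum (a c : ℂ) (j : ℕ) :
    poch (c - a) j =
      ∑ k ∈ range (j + 1), j.choose k * ((-1) ^ k * poch a k) * poch (c + k) (j - k) := by
  have h := Ring.descPochhammer_smeval_add (R := ℂ) j (Commute.all (-a) (c + j - 1))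
  simp only [Polynomial.descPochhammer_smeval_eq_ascPochhammer,
    Polynomial.ascPochhammer_smeval_eq_eval] at h
  rw [Nat.sum_antidiagonal_eq_sum_range_succ
    (fun k l => (j.choose k : ℂ) * ((ascPochhammer ℂ k).eval (-a - k + 1) *
      (ascPochhammer ℂ l).eval (c + j - 1 - l + 1)))] at h
  convert h using 1
  · rw [poch]; congr 1; ring
  · refine sum_congr rfl fun k hk => ?_
    have hkj : k ≤ j := Nat.lt_succ_iff.mp (mem_range.mp hk)
    have hshift : c + j - 1 - ((j - k : ℕ) : ℂ) + 1 = c + k := by rw [Nat.cast_sub hkj]; ring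
    rw [← poch, ← poch, poch_neg_sub_add_one, hshift, mul_assoc]

noncomputable def hyp2F1Coeff (m : ℕ) (a c : ℂ) (k : ℕ) : ℂ :=
  poch (-(m : ℂ)) k * poch a k / (poch c k * (k.factorial : ℂ))

/-- The terminating Gauss series `₂F₁(-m, a; c; w)`, a polynomial of degree `m` in `w`. -/
noncomputable def hyp2F1 (m : ℕ) (a c w : ℂ) : ℂ :=
  ∑ k ∈ range (m + 1), hyp2F1Coeff m a c k * w ^ k

lemma hyp2F1Coeff_zero (m : ℕ) (a c : ℂ) : hyp2F1Coeff m a c 0 = 1 := by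
  simp [hyp2F1Coeff, poch_zero]

lemma hyp2F1Coeff_of_lt {m k : ℕ} (h : m < k) (a c : ℂ) : hyp2F1Coeff m a c k = 0 := by
  simp [hyp2F1Coeff, poch_neg_natCast_of_lt h]

lemma conj_hyp2F1 (m : ℕ) (a c w : ℂ) :
    conj (hyp2F1 m a c w) = hyp2F1 m (conj a) (conj c) (conj w) := by
  simp [hyp2F1, hyp2F1Coeff, conj_poch]

/-- Chu–Vandermonde. -/
lemma hyp2F1_one {c : ℂ} (hc : ∀ k : ℕ, c + k ≠ 0) (j : ℕ) (a : ℂ) :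
    hyp2F1 j a c 1 = poch (c - a) j / poch c j := by
  rw [eq_div_iff (poch_ne_zero hc j), poch_sub_eq_sum, hyp2F1, sum_mul]
  refine sum_congr rfl fun k hk => ?_
  have hkj : k ≤ j := Nat.lt_succ_iff.mp (mem_range.mp hk)
  have hsplit : poch c j = poch c k * poch (c + k) (j - k) := by
    rw [← poch_add, Nat.add_sub_cancel' hkj]
  have hk! : (k.factorial : ℂ) ≠ 0 := Nat.cast_ne_zero.mpr k.factorial_ne_zero
  rw [hyp2F1Coeff, hsplit, poch_neg_natCast, Nat.descFactorial_eq_factorial_mul_choose]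
  field_simp [poch_ne_zero hc k]
  push_cast
  ring

lemma hyp2F1Coeff_mul_choose {m j k : ℕ} (hkj : k ≤ j) (a c : ℂ) :
    hyp2F1Coeff m a c k * (m - k).choose (j - k) * (-1) ^ j =
      poch (-(m : ℂ)) j / j.factorial * hyp2F1Coeff j a c k := by
  have hnat : m.descFactorial k * (m - k).choose (j - k) * j.factorial =
      m.descFactorial j * j.descFactorial k := by
    rw [← Nat.descFactorial_mul_descFactorial hkj (n := m),
      Nat.descFactorial_eq_factorial_mul_choose (m - k) (j - k),
      ← Nat.choose_mul_factorial_mul_factorial hkj, Nat.descFactorial_eq_factorial_mul_choose j k]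
    ring
  have hj! : (j.factorial : ℂ) ≠ 0 := Nat.cast_ne_zero.mpr j.factorial_ne_zero
  simp only [hyp2F1Coeff, poch_neg_natCast]
  field_simp
  congr 1
  have hcast : (m.descFactorial k : ℂ) * (m - k).choose (j - k) * j.factorial =
      m.descFactorial j * j.descFactorial k := mod_cast hnat
  linear_combination poch a k * hcast

/-- Pfaff's transformation for terminating series, written without division. -/
lemma sum_hyp2F1Coeff_mul_neg_pow_mul_one_sub_pow {c : ℂ} (hc : ∀ k : ℕ, c + k ≠ 0)
    (m : ℕ) (a w : ℂ) :
    ∑ k ∈ range (m + 1), hyp2F1Coeff m a c k * ((-w) ^ k * (1 - w) ^ (m - k)) =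
      hyp2F1 m (c - a) c w := by
  set H : ℕ → ℕ → ℂ := fun k j => hyp2F1Coeff m a c k * (m - k).choose (j - k) * (-1) ^ j * w ^ j
  have hexpand : ∀ k ∈ range (m + 1),
      hyp2F1Coeff m a c k * ((-w) ^ k * (1 - w) ^ (m - k)) = ∑ j ∈ Ico k (m + 1), H k j := by
    intro k hk
    have hkm : k ≤ m := Nat.lt_succ_iff.mp (mem_range.mp hk)
    rw [sum_Ico_eq_sum_range, show m + 1 - k = m - k + 1 by omega, sub_eq_neg_add, add_pow,
      mul_sum, mul_sum]
    refine sum_congr rfl fun i _ => ?_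
    simp only [H, Nat.add_sub_cancel_left, one_pow, mul_one, neg_pow w, pow_add]
    ring
  rw [sum_congr rfl hexpand, range_eq_Ico, sum_Ico_Ico_comm, hyp2F1, range_eq_Ico]
  refine sum_congr rfl fun j _ => ?_
  have hH : ∀ k ∈ Ico 0 (j + 1), H k j =
      poch (-(m : ℂ)) j / j.factorial * (hyp2F1Coeff j a c k * 1 ^ k) * w ^ j := fun k hk => by
    simp only [H, one_pow, mul_one]
    rw [hyp2F1Coeff_mul_choose (Nat.lt_succ_iff.mp (mem_Ico.mp hk).2)]
  rw [sum_congr rfl hH, ← sum_mul, ← mul_sum, ← range_eq_Ico, ← hyp2F1, hyp2F1_one hc,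
    hyp2F1Coeff]
  field_simp [poch_ne_zero hc j]

lemma pow_mul_hyp2F1_one_sub_inv {c : ℂ} (hc : ∀ k : ℕ, c + k ≠ 0) (m : ℕ) (a : ℂ) {z : ℂ}
    (hz : z ≠ 0) : z ^ m * hyp2F1 m a c (1 - z⁻¹) = hyp2F1 m (c - a) c (1 - z) := by
  rw [← sum_hyp2F1Coeff_mul_neg_pow_mul_one_sub_pow hc, hyp2F1, mul_sum]
  refine sum_congr rfl fun k hk => ?_
  have hkm : k ≤ m := Nat.lt_succ_iff.mp (mem_range.mp hk)
  have hpow : z ^ m * (1 - z⁻¹) ^ k = (z - 1) ^ k * z ^ (m - k) := by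
    rw [← Nat.add_sub_cancel' hkm, pow_add, Nat.add_sub_cancel_left, mul_right_comm, ← mul_pow,
      mul_sub, mul_one, mul_inv_cancel₀ hz]
  rw [neg_sub, sub_sub_cancel, ← hpow]
  ring

lemma one_sub_mul_sum_range {R : Type*} [CommRing R] (f : ℕ → R) (w : R) (n : ℕ) :
    (1 - w) * ∑ k ∈ range (n + 1), f k * w ^ k =
      f 0 + ∑ k ∈ range (n + 1), (f (k + 1) - f k) * w ^ (k + 1) - f (n + 1) * w ^ (n + 1) := by
  induction n with
  | zero => simp; ring
  | succ n ih => rw [sum_range_succ, mul_add, ih, sum_range_succ _ (n + 1)]; ring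

lemma hyp2F1Coeff_contiguous {c : ℂ} (hc : ∀ k : ℕ, c + k ≠ 0) (m : ℕ) (a : ℂ) (k : ℕ) :
    c * hyp2F1Coeff (m + 1) a c (k + 1) =
      a * (hyp2F1Coeff m (a + 1) (c + 1) (k + 1) - hyp2F1Coeff m (a + 1) (c + 1) k) +
        (c - a) * hyp2F1Coeff m a (c + 1) (k + 1) := by
  have hc0 : c ≠ 0 := by simpa using hc 0
  have hc1 : ∀ i : ℕ, c + 1 + i ≠ 0 := fun i => by
    convert hc (i + 1) using 1; push_cast; ring
  have hck := hc1 k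
  have hpoch := poch_ne_zero hc1 k
  have hk1 : (k : ℂ) + 1 ≠ 0 := Nat.cast_add_one_ne_zero k
  have hm : -((m + 1 : ℕ) : ℂ) + 1 = -m := by push_cast; ring
  simp only [hyp2F1Coeff]
  rw [poch_succ_left (-((m + 1 : ℕ) : ℂ)), hm, poch_succ_left a, poch_succ_left c,
    poch_succ_right (-(m : ℂ)), poch_succ_right (a + 1), poch_succ_right (c + 1),
    Nat.factorial_succ]
  push_cast
  field_simp
  ring

lemma hyp2F1_eq_one_add_sum {m N : ℕ} (hmN : m ≤ N) (a c w : ℂ) :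
    hyp2F1 m a c w = 1 + ∑ k ∈ range N, hyp2F1Coeff m a c (k + 1) * w ^ (k + 1) := by
  rw [hyp2F1, sum_range_succ', hyp2F1Coeff_zero, pow_zero, mul_one, add_comm]
  refine congrArg _ (sum_subset (range_subset_range.mpr hmN) fun k _ hk => ?_)
  rw [hyp2F1Coeff_of_lt (by simp at hk; omega), zero_mul]

lemma hyp2F1_contiguous {c : ℂ} (hc : ∀ k : ℕ, c + k ≠ 0) (m : ℕ) (a w : ℂ) :
    c * hyp2F1 (m + 1) a c w =
      a * (1 - w) * hyp2F1 m (a + 1) (c + 1) w + (c - a) * hyp2F1 m a (c + 1) w := by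
  have hB : (1 - w) * hyp2F1 m (a + 1) (c + 1) w = 1 + ∑ k ∈ range (m + 1),
      (hyp2F1Coeff m (a + 1) (c + 1) (k + 1) - hyp2F1Coeff m (a + 1) (c + 1) k) * w ^ (k + 1) := by
    rw [hyp2F1, one_sub_mul_sum_range, hyp2F1Coeff_zero, hyp2F1Coeff_of_lt m.lt_succ_self,
      zero_mul, sub_zero]
  rw [mul_assoc, hB, hyp2F1_eq_one_add_sum le_rfl, hyp2F1_eq_one_add_sum m.le_succ, mul_add,
    mul_one, mul_sum, mul_add, mul_one, mul_sum, mul_add, mul_one, mul_sum, add_add_add_comm,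
    ← sum_add_distrib]
  congr 1
  · ring
  · refine sum_congr rfl fun k _ => ?_
    rw [← mul_assoc, hyp2F1Coeff_contiguous hc]
    ring

lemma RR_eq_hyp2F1 (lam eta : ℝ) (n : ℕ) (z : ℂ) :
    RR lam eta n z =
      poch (2 * lam) n / poch lam n * hyp2F1 n (lam + eta * I) (2 * lam) (1 - z) := rfl

lemma Phi_eq_hyp2F1 (lam eta : ℝ) (n : ℕ) (z : ℂ) :
    Phi lam eta n z = poch (2 * lam + 1) n / poch (lam + eta * I + 1) n *
      hyp2F1 n (lam + eta * I + 1) (2 * lam + 1) (1 - z) := rfl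

lemma two_mul_ofReal_add_natCast_ne_zero {lam : ℝ} (hlam : 0 < lam) (k : ℕ) :
    2 * (lam : ℂ) + k ≠ 0 :=
  add_natCast_ne_zero_of_re_pos (by simpa using hlam) k

/-- Pfaff's transformation trades the parameter `b̄ + 1` of the conjugated series for
`(2λ + 1) - (b̄ + 1) = b`. -/
lemma PhiStar_eq_hyp2F1 {lam : ℝ} (hlam : 0 < lam) (eta : ℝ) (n : ℕ) {z : ℂ} (hz : z ≠ 0) :
    PhiStar lam eta n z = poch (2 * lam + 1) n / poch (lam - eta * I + 1) n *
      hyp2F1 n (lam + eta * I) (2 * lam + 1) (1 - z) := by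
  have hc : ∀ k : ℕ, 2 * (lam : ℂ) + 1 + k ≠ 0 := fun k => by
    convert two_mul_ofReal_add_natCast_ne_zero hlam (k + 1) using 1; push_cast; ring
  have hb : (2 * lam + 1 : ℂ) - (lam - eta * I + 1) = lam + eta * I := by ring
  simp only [PhiStar, Phi_eq_hyp2F1, map_mul, map_div₀, conj_poch, conj_hyp2F1, map_add, map_sub,
    map_one, map_ofNat, conj_ofReal, conj_I, map_inv₀, conj_conj, mul_neg, ← sub_eq_add_neg]
  rw [mul_left_comm, pow_mul_hyp2F1_one_sub_inv hc _ _ hz, hb]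

theorem stmt9 (lam eta : ℝ) (hlam : 0 < lam) (n : ℕ) (hn : 1 ≤ n) (z : ℂ) (hz : z ≠ 0) :
    RR lam eta n z =
      (poch ((lam : ℂ) + (eta : ℂ) * I) n / poch (lam : ℂ) n) *
        (z * Phi lam eta (n - 1) z +
          (poch ((lam : ℂ) - (eta : ℂ) * I) n / poch ((lam : ℂ) + (eta : ℂ) * I) n) *
            PhiStar lam eta (n - 1) z) := by
  obtain ⟨m, rfl⟩ : ∃ m, n = m + 1 := ⟨n - 1, by omega⟩
  have hb : (lam + eta * I : ℂ) ≠ 0 := ne_zero_of_re_pos (by simpa using hlam)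
  have hb1 : poch (lam + eta * I + 1) m ≠ 0 :=
    poch_ne_zero (add_natCast_ne_zero_of_re_pos (by simp; linarith)) m
  have hb1' : poch (lam - eta * I + 1) m ≠ 0 :=
    poch_ne_zero (add_natCast_ne_zero_of_re_pos (by simp; linarith)) m
  have hlam' : poch lam (m + 1) ≠ 0 :=
    poch_ne_zero (add_natCast_ne_zero_of_re_pos (by simpa using hlam)) (m + 1)
  have hcontiguous := hyp2F1_contiguous (two_mul_ofReal_add_natCast_ne_zero hlam) m
    (lam + eta * I) (1 - z)
  rw [Nat.add_sub_cancel, RR_eq_hyp2F1, Phi_eq_hyp2F1, PhiStar_eq_hyp2F1 hlam eta m hz,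
    poch_succ_left (lam + eta * I), poch_succ_left (lam - eta * I), poch_succ_left (2 * lam)]
  field_simp
  linear_combination poch (2 * lam + 1) m * hcontiguous
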